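/- The gradient-descent pushforward is an optimal transport map: assume F is Wasserstein differentiable with ∇_μF(μ)(x) = ∇(δF/δμ)(μ,x), |∇_μF(μ)(x)| ≤ C_F', (μ,x) ↦ ∇_μF(μ)(x) jointly continuous, and |∇_μF(μ')(x') − ∇_μF(μ)(x)| ≤ L_F'(|x'−x| + W2(μ',μ)). Let μ ∈ P2(R^d) be absolutely continuous with respect to Lebesgue measure, let 0 < τ < 1/L_F', and set ν := (Id − τ∇_μF(μ))_# μ. Then the map Id − τ∇_μF(μ)(·) is an optimal transport map from μ to ν, and ν is absolutely continuous with respect to Lebesgue measure with finite second moment. -/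

import Mathlib

open MeasureTheory Filter Set
open scoped ENNReal NNReal Topology RealInnerProductSpace Classical

noncomputable section

/-- Euclidean space `ℝ^d`. -/
abbrev Ed (d : ℕ) := EuclideanSpace ℝ (Fin d)

/-- `μ` is a probability measure on `ℝ^d` with finite second moment (i.e. `μ ∈ P₂(ℝ^d)`). -/
def P2 {d : ℕ} (μ : Measure (Ed d)) : Prop :=
  IsProbabilityMeasure μ ∧ Integrable (fun x => ‖x‖ ^ 2) μ

/-- `γ` is a coupling of `μ` and `ν`. -/
def IsCoupling {d : ℕ} (γ : Measure (Ed d × Ed d)) (μ ν : Measure (Ed d)) : Prop :=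
  γ.map Prod.fst = μ ∧ γ.map Prod.snd = ν

/-- The squared 2-Wasserstein distance `W₂²(μ,ν)`. -/
def W2sq {d : ℕ} (μ ν : Measure (Ed d)) : ℝ :=
  sInf { r : ℝ | ∃ γ : Measure (Ed d × Ed d), IsCoupling γ μ ν ∧
      Integrable (fun p => ‖p.1 - p.2‖ ^ 2) γ ∧ r = ∫ p, ‖p.1 - p.2‖ ^ 2 ∂γ }

/-- The 2-Wasserstein distance `W₂(μ,ν)`. -/
def W2 {d : ℕ} (μ ν : Measure (Ed d)) : ℝ := Real.sqrt (W2sq μ ν)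

/-- `T` is an optimal transport map from `μ` to `ν`. -/
def IsOptimalMap {d : ℕ} (μ ν : Measure (Ed d)) (T : Ed d → Ed d) : Prop :=
  Measurable T ∧ μ.map T = ν ∧ Integrable (fun x => ‖x - T x‖ ^ 2) μ ∧
    ∫ x, ‖x - T x‖ ^ 2 ∂μ = W2sq μ ν

/-- The Kullback–Leibler divergence `KL(μ|π)`, equal to `+∞` unless `μ ≪ π` and the
relative entropy integral makes sense. -/
def KL {d : ℕ} (μ π : Measure (Ed d)) : ℝ≥0∞ :=
  if μ ≪ π ∧ Integrable (fun x => Real.log ((μ.rnDeriv π x).toReal)) μ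
  then ENNReal.ofReal (∫ x, Real.log ((μ.rnDeriv π x).toReal) ∂μ)
  else ⊤

/-- `g` is a weak (distributional) gradient of `f : ℝ^d → ℝ`. -/
def HasWeakGradient {d : ℕ} (f : Ed d → ℝ) (g : Ed d → Ed d) : Prop :=
  ∀ φ : Ed d → ℝ, ContDiff ℝ (⊤ : ℕ∞) φ → HasCompactSupport φ →
    ∫ x, f x • gradient φ x = - ∫ x, φ x • g x

/-- Relative Fisher information `I(μ|ν) = ∫ |∇ log (dμ/dν)|² dμ = 4 ∫ |∇ √(dμ/dν)|² dν`,
equal to `+∞` unless `μ ≪ ν` and `√(dμ/dν)` has a weak gradient. -/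
def FisherInfo {d : ℕ} (μ ν : Measure (Ed d)) : ℝ≥0∞ :=
  if μ ≪ ν then
    sInf { r : ℝ≥0∞ | ∃ g : Ed d → Ed d,
      HasWeakGradient (fun x => Real.sqrt ((μ.rnDeriv ν x).toReal)) g ∧
      r = 4 * ∫⁻ x, (‖g x‖₊ : ℝ≥0∞) ^ 2 ∂ν }
  else ⊤

/-- The Sobolev regularity class `𝔠 = { m ∈ P₂ : m ≪ π, dm/dπ ∈ W^{1,1}_loc,
√(dm/dπ) ∈ W^{1,2}_π }`. -/
def ClassC {d : ℕ} (π m : Measure (Ed d)) : Prop :=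
  P2 m ∧ m ≪ π ∧
  (LocallyIntegrable (fun x => (m.rnDeriv π x).toReal) volume ∧
    ∃ g : Ed d → Ed d, LocallyIntegrable g volume ∧
      HasWeakGradient (fun x => (m.rnDeriv π x).toReal) g) ∧
  (MemLp (fun x => Real.sqrt ((m.rnDeriv π x).toReal)) 2 π ∧
    ∃ h : Ed d → Ed d, MemLp h 2 π ∧
      HasWeakGradient (fun x => Real.sqrt ((m.rnDeriv π x).toReal)) h)

/-- `DF` is the flat (linear functional) derivative of `F` on `P₂(ℝ^d)`. -/
structure IsFlatDeriv {d : ℕ} (F : Measure (Ed d) → ℝ)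
    (DF : Measure (Ed d) → Ed d → ℝ) : Prop where
  growth : ∃ κ > (0 : ℝ), ∀ (μ : Measure (Ed d)) (x : Ed d), P2 μ →
    |DF μ x| ≤ κ * (1 + ‖x‖ ^ 2)
  limit : ∀ μ μ' : Measure (Ed d), P2 μ → P2 μ' →
    Tendsto (fun ε : ℝ =>
        (F (ENNReal.ofReal (1 - ε) • μ + ENNReal.ofReal ε • μ') - F μ) / ε)
      (nhdsWithin 0 (Set.Ioi 0))
      (nhds ((∫ x, DF μ x ∂μ') - ∫ x, DF μ x ∂μ))
  centered : ∀ μ : Measure (Ed d), P2 μ → (∫ x, DF μ x ∂μ) = 0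

/-- Flat convexity of `F`: `F(μ') - F(μ) ≥ ∫ δF/δμ(μ,x) (μ'-μ)(dx)`. -/
def FlatConvex {d : ℕ} (F : Measure (Ed d) → ℝ)
    (DF : Measure (Ed d) → Ed d → ℝ) : Prop :=
  ∀ μ μ' : Measure (Ed d), P2 μ → P2 μ' →
    (∫ x, DF μ x ∂μ') - (∫ x, DF μ x ∂μ) ≤ F μ' - F μ

/-- Lipschitz continuity of the flat derivative. -/
def FlatLip {d : ℕ} (DF : Measure (Ed d) → Ed d → ℝ) (L : ℝ) : Prop :=
  ∀ (μ μ' : Measure (Ed d)) (x x' : Ed d), P2 μ → P2 μ' →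
    |DF μ' x' - DF μ x| ≤ L * (‖x' - x‖ + W2 μ' μ)

/-- Boundedness of the flat derivative. -/
def FlatBdd {d : ℕ} (DF : Measure (Ed d) → Ed d → ℝ) (C : ℝ) : Prop :=
  ∀ (μ : Measure (Ed d)) (x : Ed d), P2 μ → |DF μ x| ≤ C

/-- Lipschitz continuity of the Wasserstein gradient. -/
def GradLip {d : ℕ} (G : Measure (Ed d) → Ed d → Ed d) (L : ℝ) : Prop :=
  ∀ (μ μ' : Measure (Ed d)) (x x' : Ed d), P2 μ → P2 μ' →
    ‖G μ' x' - G μ x‖ ≤ L * (‖x' - x‖ + W2 μ' μ)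

/-- Joint continuity of the Wasserstein gradient in `(μ,x)` with respect to
the product of the `W₂` and norm topologies. -/
def GradJointCont {d : ℕ} (G : Measure (Ed d) → Ed d → Ed d) : Prop :=
  ∀ (μ : Measure (Ed d)) (x : Ed d), P2 μ → ∀ ε > (0 : ℝ), ∃ δ > (0 : ℝ),
    ∀ (μ' : Measure (Ed d)) (x' : Ed d), P2 μ' →
      W2 μ' μ < δ → ‖x' - x‖ < δ → ‖G μ' x' - G μ x‖ < ε

/-- The normalized Gibbs measure with potential `V`, i.e. `Z⁻¹ e^{-V(x)} dx`. -/
def gibbs {d : ℕ} (V : Ed d → ℝ) : Measure (Ed d) :=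
  volume.withDensity (fun x => ENNReal.ofReal (Real.exp (-V x) / ∫ y, Real.exp (-V y)))

/-- The proximal Gibbs measure `Φ[μ] ∝ e^{-σ⁻¹ δF/δμ(μ,·) - U}`. -/
def proxGibbs {d : ℕ} (DF : Measure (Ed d) → Ed d → ℝ) (U : Ed d → ℝ) (σ : ℝ)
    (μ : Measure (Ed d)) : Measure (Ed d) :=
  gibbs (fun x => σ⁻¹ * DF μ x + U x)

/-- The entropy-regularized objective `F^σ(μ) = F(μ) + σ KL(μ|π)`, with values in `EReal`. -/
def FSigma {d : ℕ} (F : Measure (Ed d) → ℝ) (π : Measure (Ed d)) (σ : ℝ)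
    (μ : Measure (Ed d)) : EReal :=
  (F μ : EReal) + (σ : EReal) * (KL μ π : EReal)

/-- The objective of one proximal point (JKO) step with base point `μprev`. -/
def JKOprox {d : ℕ} (F : Measure (Ed d) → ℝ) (π : Measure (Ed d)) (σ τ : ℝ)
    (μprev μ : Measure (Ed d)) : EReal :=
  (F μ : EReal) + (σ : EReal) * (KL μ π : EReal)
    + ((W2sq μ μprev / (2 * τ) : ℝ) : EReal)

/-- The objective of one prox-linear step with base point `μprev`. -/
def JKOlin {d : ℕ} (DF : Measure (Ed d) → Ed d → ℝ) (π : Measure (Ed d)) (σ τ : ℝ)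
    (μprev μ : Measure (Ed d)) : EReal :=
  (((∫ x, DF μprev x ∂μ) - ∫ x, DF μprev x ∂μprev : ℝ) : EReal)
    + (σ : EReal) * (KL μ π : EReal) + ((W2sq μ μprev / (2 * τ) : ℝ) : EReal)

/-- The objective of the JKO step of the proximal gradient scheme, with base point `νnew`. -/
def JKOgrad {d : ℕ} (π : Measure (Ed d)) (σ τ : ℝ)
    (νnew μ : Measure (Ed d)) : EReal :=
  (σ : EReal) * (KL μ π : EReal) + ((W2sq μ νnew / (2 * τ) : ℝ) : EReal)

/-- `U` is bounded below. -/
def UBoundedBelow {d : ℕ} (U : Ed d → ℝ) : Prop := ∃ c : ℝ, ∀ x, c ≤ U x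

/-- `U` has at least quadratic growth at infinity. -/
def UQuadGrowth {d : ℕ} (U : Ed d → ℝ) : Prop :=
  ∃ c > (0 : ℝ), ∃ R : ℝ, ∀ x : Ed d, R ≤ ‖x‖ → c * ‖x‖ ^ 2 ≤ U x

/-- `U` is `α`-strongly convex (monotonicity of the gradient). -/
def StronglyConvexPot {d : ℕ} (U : Ed d → ℝ) (α : ℝ) : Prop :=
  ∀ x y : Ed d, α * ‖x - y‖ ^ 2 ≤ ⟪x - y, gradient U x - gradient U y⟫

/-- helper: subgradient inequality for `u = ‖·‖²/2 - τ f` when `Id - τ G` is monotone. -/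
lemma subgrad_aux {d : ℕ} (f : Ed d → ℝ) (G : Ed d → Ed d) (τ : ℝ)
    (hgrad : ∀ x, HasGradientAt f (G x) x)
    (hmono : ∀ x y : Ed d, 0 ≤ ⟪x - y, (x - τ • G x) - (y - τ • G y)⟫)
    (x z : Ed d) :
    (‖x‖^2/2 - τ * f x) + ⟪x - τ • G x, z - x⟫ ≤ ‖z‖^2/2 - τ * f z := by
  set u : Ed d → ℝ := fun w => ‖w‖^2/2 - τ * f w with hu
  set v : Ed d → Ed d := fun w => w - τ • G w with hv
  set g : ℝ → ℝ := fun t => u (x + t • (z - x)) with hg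
  have hline : ∀ t : ℝ, HasDerivAt (fun s : ℝ => x + s • (z - x)) (z - x) t := by
    intro t
    simpa using ((hasDerivAt_id t).smul_const (z - x)).const_add x
  have hderiv : ∀ t : ℝ, HasDerivAt g ⟪v (x + t • (z - x)), z - x⟫ t := by
    intro t
    have h1 : HasDerivAt (fun s : ℝ => f (x + s • (z - x)))
        ⟪G (x + t • (z - x)), z - x⟫ t := by
      have := (hgrad (x + t • (z - x))).hasFDerivAt.comp_hasDerivAt t (hline t)
      simpa [InnerProductSpace.toDual_apply_apply, Function.comp_def] using this
    have h2 : HasDerivAt (fun s : ℝ => ‖x + s • (z - x)‖^2/2)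
        ⟪x + t • (z - x), z - x⟫ t := by
      have heq : (fun s : ℝ => ‖x + s • (z - x)‖^2/2)
          = fun s : ℝ => (‖x‖^2 + 2 * (s * ⟪x, z - x⟫) + s^2 * ‖z - x‖^2)/2 := by
        funext s
        rw [norm_add_sq_real, real_inner_smul_right, norm_smul]
        rw [Real.norm_eq_abs]
        ring_nf
        rw [sq_abs]
      rw [heq]
      have : HasDerivAt (fun s : ℝ => (‖x‖^2 + 2 * (s * ⟪x, z - x⟫) + s^2 * ‖z - x‖^2)/2)
          ((0 + 2 * (1 * ⟪x, z - x⟫) + 2 * t ^ 1 * ‖z - x‖^2)/2) t := by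
        exact ((((hasDerivAt_const t _).add (((hasDerivAt_id t).mul_const _).const_mul 2)).add
          ((hasDerivAt_pow 2 t).mul_const _)).div_const 2)
      convert this using 1
      rw [inner_add_left, real_inner_smul_left, real_inner_self_eq_norm_sq]
      ring
    have := h2.sub (h1.const_mul τ)
    convert this using 1
    · rfl
    · rfl
    · rfl
    simp only [hv, inner_sub_left, real_inner_smul_left]
  rcases eq_or_ne z x with rfl | hzx
  · simp
  have hMVT := exists_hasDerivAt_eq_slope g (fun t => ⟪v (x + t • (z - x)), z - x⟫)
    one_pos (fun t _ => (hderiv t).continuousAt.continuousWithinAt) (fun t _ => hderiv t)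
  obtain ⟨c, hc, hceq⟩ := hMVT
  have hg1 : g 1 = u z := by simp [hg]
  have hg0 : g 0 = u x := by simp [hg]
  have key : ⟪v x, z - x⟫ ≤ ⟪v (x + c • (z - x)), z - x⟫ := by
    have := hmono (x + c • (z - x)) x
    have hxx : x + c • (z - x) - x = c • (z - x) := by abel
    rw [hxx, real_inner_smul_left] at this
    have hc0 : 0 < c := hc.1
    have h3 : 0 ≤ ⟪z - x, v (x + c • (z - x)) - v x⟫ :=
      (mul_nonneg_iff_of_pos_left hc0).mp this
    rw [real_inner_comm, inner_sub_left] at h3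
    linarith
  have hslope : ⟪v (x + c • (z - x)), z - x⟫ = u z - u x := by
    rw [hceq, hg1, hg0]; ring
  have hfin := key.trans_eq hslope
  have hux : u x = ‖x‖^2/2 - τ * f x := rfl
  have huz : u z = ‖z‖^2/2 - τ * f z := rfl
  have hvx : v x = x - τ • G x := rfl
  rw [hvx] at hfin
  rw [← hux, ← huz]
  linarith

/-- helper: a set is Lebesgue-null iff it is null for the `d`-dimensional Hausdorff measure. -/
lemma vol_null_iff_hausdorff {d : ℕ} (s : Set (Ed d)) :
    volume s = 0 ↔ μH[(Module.finrank ℝ (Ed d) : ℝ)] s = 0 := by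
  have h1 : (volume : Measure (Ed d)) =
      (Measure.addHaarScalarFactor volume μH[(Module.finrank ℝ (Ed d) : ℝ)]) •
        μH[(Module.finrank ℝ (Ed d) : ℝ)] :=
    Measure.isAddLeftInvariant_eq_smul _ _
  have h2 : (μH[(Module.finrank ℝ (Ed d) : ℝ)] : Measure (Ed d)) =
      (Measure.addHaarScalarFactor μH[(Module.finrank ℝ (Ed d) : ℝ)] volume) • volume :=
    Measure.isAddLeftInvariant_eq_smul _ _
  constructor
  · intro h
    rw [h2, Measure.smul_apply, h, smul_zero]
  · intro h
    rw [h1, Measure.smul_apply, h, smul_zero]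

lemma cost_cont {d : ℕ} : Continuous (fun p : Ed d × Ed d => ‖p.1 - p.2‖ ^ 2) :=
  ((continuous_fst.sub continuous_snd).norm).pow 2

lemma W2sq_self {d : ℕ} (μ : Measure (Ed d)) (hμ : IsProbabilityMeasure μ) :
    W2sq μ μ = 0 := by
  set e : Ed d → Ed d × Ed d := fun x => (x, x) with he
  have hemeas : Measurable e := measurable_id.prodMk measurable_id
  set γ : Measure (Ed d × Ed d) := μ.map e with hγ
  have h1 : γ.map Prod.fst = μ := by
    rw [hγ, Measure.map_map measurable_fst hemeas]
    exact Measure.map_id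
  have h2 : γ.map Prod.snd = μ := by
    rw [hγ, Measure.map_map measurable_snd hemeas]
    exact Measure.map_id
  have hce : (fun p : Ed d × Ed d => ‖p.1 - p.2‖ ^ 2) ∘ e = fun _ => (0:ℝ) := by
    funext x; simp [he]
  have hint : Integrable (fun p : Ed d × Ed d => ‖p.1 - p.2‖ ^ 2) γ := by
    rw [hγ, integrable_map_measure cost_cont.aestronglyMeasurable hemeas.aemeasurable, hce]
    exact integrable_const 0
  have hval : ∫ p, ‖p.1 - p.2‖ ^ 2 ∂γ = 0 := by
    rw [hγ, integral_map hemeas.aemeasurable cost_cont.aestronglyMeasurable]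
    simp [he]
  have hmem : (0:ℝ) ∈ { r : ℝ | ∃ γ : Measure (Ed d × Ed d), IsCoupling γ μ μ ∧
      Integrable (fun p => ‖p.1 - p.2‖ ^ 2) γ ∧ r = ∫ p, ‖p.1 - p.2‖ ^ 2 ∂γ } :=
    ⟨γ, ⟨h1, h2⟩, hint, hval.symm⟩
  have hlb : ∀ r ∈ { r : ℝ | ∃ γ : Measure (Ed d × Ed d), IsCoupling γ μ μ ∧
      Integrable (fun p => ‖p.1 - p.2‖ ^ 2) γ ∧ r = ∫ p, ‖p.1 - p.2‖ ^ 2 ∂γ }, (0:ℝ) ≤ r := by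
    rintro r ⟨γ', _, _, rfl⟩
    exact integral_nonneg fun p => by positivity
  exact le_antisymm (csInf_le ⟨0, hlb⟩ hmem) (le_csInf ⟨0, hmem⟩ hlb)

set_option maxHeartbeats 4000000 in
/-- **The gradient-descent pushforward is an optimal transport map** (Lemma 7.1).
If `F` is Wasserstein differentiable with bounded, jointly continuous and
`L_F'`-Lipschitz gradient, `μ ∈ P₂(ℝ^d)` is absolutely continuous and `0 < τ < 1/L_F'`,
then `Id - τ∇_μF(μ)` is an optimal transport map from `μ` to
`ν := (Id - τ∇_μF(μ))_# μ`, and `ν` is absolutely continuous with finite second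
moment. -/
theorem gradient_pushforward_is_optimal {d : ℕ}
    (F : Measure (Ed d) → ℝ) (DF : Measure (Ed d) → Ed d → ℝ)
    (gradDF : Measure (Ed d) → Ed d → Ed d) (C_F' L_F' τ : ℝ)
    -- F ∈ C¹ with flat derivative DF
    (hflat : IsFlatDeriv F DF)
    -- Wasserstein differentiability of F with bounded, jointly continuous gradient
    (hgrad : ∀ (μ : Measure (Ed d)) (x : Ed d), P2 μ → HasGradientAt (DF μ) (gradDF μ x) x)
    (hgradbd : ∀ (μ : Measure (Ed d)) (x : Ed d), P2 μ → ‖gradDF μ x‖ ≤ C_F')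
    (hgradcont : GradJointCont gradDF)
    -- Lipschitzness of the Wasserstein gradient
    (hgradlip : GradLip gradDF L_F')
    (hL : 0 < L_F') (hτ : 0 < τ) (hτ1 : τ < 1 / L_F')
    -- μ ∈ P₂ absolutely continuous w.r.t. Lebesgue measure
    (μ : Measure (Ed d)) (hμP2 : P2 μ) (hμac : μ ≪ volume) :
    IsOptimalMap μ (μ.map (fun x => x - τ • gradDF μ x)) (fun x => x - τ • gradDF μ x) ∧
    μ.map (fun x => x - τ • gradDF μ x) ≪ volume ∧
    P2 (μ.map (fun x => x - τ • gradDF μ x)) := by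
  obtain ⟨hμprob, hμ2⟩ := hμP2
  have hμP2' : P2 μ := ⟨hμprob, hμ2⟩
  set G : Ed d → Ed d := gradDF μ with hG
  set T : Ed d → Ed d := fun x => x - τ • G x with hT
  have hC0 : 0 ≤ C_F' := le_trans (norm_nonneg _) (hgradbd μ 0 hμP2')
  have hτL : τ * L_F' < 1 := by
    rw [lt_div_iff₀ hL] at hτ1; exact hτ1
  have hτL0 : 0 ≤ 1 - τ * L_F' := by linarith
  have hW2self : W2 μ μ = 0 := by
    rw [W2, W2sq_self μ hμprob, Real.sqrt_zero]
  have hGlip : ∀ x y, ‖G x - G y‖ ≤ L_F' * ‖x - y‖ := by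
    intro x y
    have h := hgradlip μ μ y x hμP2' hμP2'
    rw [hW2self] at h
    simpa using h
  have hGcont : Continuous G := by
    have hl : LipschitzWith (Real.toNNReal L_F') G := by
      rw [lipschitzWith_iff_dist_le_mul]
      intro x y
      rw [dist_eq_norm, dist_eq_norm]
      calc ‖G x - G y‖ ≤ L_F' * ‖x - y‖ := hGlip x y
        _ ≤ _ := mul_le_mul_of_nonneg_right (Real.le_coe_toNNReal L_F') (norm_nonneg _)
    exact hl.continuous
  have hGbd : ∀ x, ‖G x‖ ≤ C_F' := fun x => hgradbd μ x hμP2'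
  have hGmeas : Measurable G := hGcont.measurable
  have hTmeas : Measurable T := measurable_id.sub (hGmeas.const_smul τ)
  have hTcont : Continuous T := continuous_id.sub (hGcont.const_smul τ)
  have hTsub : ∀ x y : Ed d, T x - T y = (x - y) - τ • (G x - G y) := by
    intro x y; simp only [hT]; rw [smul_sub]; abel
  have hmono : ∀ x y : Ed d, 0 ≤ ⟪x - y, T x - T y⟫ := by
    intro x y
    rw [hTsub, inner_sub_right, real_inner_self_eq_norm_sq, real_inner_smul_right]
    have h1 : ⟪x - y, G x - G y⟫ ≤ ‖x - y‖ * ‖G x - G y‖ := real_inner_le_norm _ _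
    have h2 : ‖G x - G y‖ ≤ L_F' * ‖x - y‖ := hGlip x y
    have h3 : τ * ⟪x - y, G x - G y⟫ ≤ τ * (‖x - y‖ * ‖G x - G y‖) :=
      mul_le_mul_of_nonneg_left h1 hτ.le
    have h4 : ‖x - y‖ * ‖G x - G y‖ ≤ ‖x - y‖ * (L_F' * ‖x - y‖) :=
      mul_le_mul_of_nonneg_left h2 (norm_nonneg _)
    nlinarith [norm_nonneg (x - y), sq_nonneg (‖x - y‖)]
  have hTbd : ∀ x, ‖T x‖ ≤ ‖x‖ + τ * C_F' := by
    intro x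
    calc ‖T x‖ ≤ ‖x‖ + ‖τ • G x‖ := norm_sub_le _ _
      _ ≤ ‖x‖ + τ * C_F' := by
        rw [norm_smul, Real.norm_eq_abs, abs_of_pos hτ]
        exact add_le_add_right (mul_le_mul_of_nonneg_left (hGbd x) hτ.le) _
  have hT2int : Integrable (fun x => ‖T x‖ ^ 2) μ := by
    refine Integrable.mono' (g := fun x => 2 * ‖x‖^2 + 2 * (τ*C_F')^2)
      ((hμ2.const_mul 2).add (integrable_const (2 * (τ*C_F')^2)))
      ((hTcont.norm.pow 2).aestronglyMeasurable) ?_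
    filter_upwards with x
    rw [Real.norm_eq_abs, abs_of_nonneg (by positivity)]
    have h1 := hTbd x
    nlinarith [norm_nonneg x, norm_nonneg (T x), sq_nonneg (‖x‖ - τ*C_F'),
      mul_nonneg hτ.le hC0]
  have hνprob : IsProbabilityMeasure (μ.map T) := Measure.isProbabilityMeasure_map hTmeas.aemeasurable
  have hν2 : Integrable (fun y : Ed d => ‖y‖ ^ 2) (μ.map T) := by
    rw [integrable_map_measure (g := fun y : Ed d => ‖y‖ ^ 2) (continuous_norm.pow 2).aestronglyMeasurable hTmeas.aemeasurable]
    exact hT2int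
  have hνP2 : P2 (μ.map T) := ⟨hνprob, hν2⟩
  set f : Ed d → ℝ := DF μ with hf
  have hfgrad : ∀ x, HasGradientAt f (G x) x := fun x => hgrad μ x hμP2'
  have hfcont : Continuous f := continuous_iff_continuousAt.mpr fun x => (hfgrad x).continuousAt
  have hflipsch : ∀ x y : Ed d, |f x - f y| ≤ C_F' * ‖x - y‖ := by
    intro x y
    have hderiv : ∀ z ∈ (Set.univ : Set (Ed d)),
        HasFDerivWithinAt f (InnerProductSpace.toDual ℝ (Ed d) (G z)) Set.univ z :=
      fun z _ => ((hfgrad z).hasFDerivAt).hasFDerivWithinAt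
    have hbd : ∀ z ∈ (Set.univ : Set (Ed d)),
        ‖InnerProductSpace.toDual ℝ (Ed d) (G z)‖ ≤ C_F' := by
      intro z _
      rw [LinearIsometryEquiv.norm_map]
      exact hGbd z
    have := Convex.norm_image_sub_le_of_norm_hasFDerivWithin_le hderiv hbd convex_univ
      (Set.mem_univ y) (Set.mem_univ x)
    simpa [Real.norm_eq_abs] using this
  have hfbd : ∀ x, |f x| ≤ |f 0| + C_F' * ‖x‖ := by
    intro x
    have h := hflipsch x 0
    rw [sub_zero] at h
    have h2 : |f x| - |f 0| ≤ |f x - f 0| := abs_sub_abs_le_abs_sub _ _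
    linarith
  set u : Ed d → ℝ := fun w => ‖w‖^2/2 - τ * f w with hu
  have hucont : Continuous u := ((continuous_norm.pow 2).div_const 2).sub (continuous_const.mul hfcont)
  have husub : ∀ x z, u x + ⟪T x, z - x⟫ ≤ u z := fun x z =>
    subgrad_aux f G τ hfgrad (fun a b => hmono a b) x z
  have hnorm_le : ∀ x : Ed d, ‖x‖ ≤ 1 + ‖x‖^2 := by
    intro x; nlinarith [sq_nonneg (‖x‖ - 1), norm_nonneg x]
  have huint : Integrable u μ := by
    refine Integrable.mono' (g := fun x => (1/2 + τ*C_F') * ‖x‖^2 + (τ*|f 0| + τ*C_F'))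
      ((hμ2.const_mul (1/2 + τ*C_F')).add (integrable_const (τ*|f 0| + τ*C_F')))
      hucont.aestronglyMeasurable ?_
    filter_upwards with x
    rw [Real.norm_eq_abs]
    have h1 : |u x| ≤ ‖x‖^2/2 + τ * |f x| := by
      simp only [hu]
      calc |‖x‖^2/2 - τ * f x| ≤ |‖x‖^2/2| + |τ * f x| := abs_sub _ _
        _ = ‖x‖^2/2 + τ * |f x| := by
          rw [abs_of_nonneg (by positivity), abs_mul, abs_of_pos hτ]
    have h2 := hfbd x
    have h3 := hnorm_le x
    have h4 : τ * |f x| ≤ τ * (|f 0| + C_F' * ‖x‖) := mul_le_mul_of_nonneg_left h2 hτ.le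
    have h5 : τ * C_F' * ‖x‖ ≤ τ * C_F' * (1 + ‖x‖^2) :=
      mul_le_mul_of_nonneg_left h3 (mul_nonneg hτ.le hC0)
    nlinarith
  set D : ℕ → Ed d := TopologicalSpace.denseSeq (Ed d) with hD
  set φ : Ed d → Ed d → ℝ := fun w y => ⟪w, y⟫ - u w with hφ
  set M : Ed d → ℝ := fun y => (‖y‖ + τ*C_F')^2/2 + τ*|f 0| with hM
  have hφbd : ∀ w y, φ w y ≤ M y := by
    intro w y
    have h1 : ⟪w, y⟫ ≤ ‖w‖ * ‖y‖ := real_inner_le_norm w y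
    have h2 : τ * f w ≤ τ * (|f 0| + C_F' * ‖w‖) :=
      mul_le_mul_of_nonneg_left ((le_abs_self _).trans (hfbd w)) hτ.le
    simp only [hφ, hM, hu]
    nlinarith [sq_nonneg (‖w‖ - (‖y‖ + τ*C_F')), norm_nonneg w, norm_nonneg y,
      mul_nonneg hτ.le hC0]
  have hbdd : ∀ y, BddAbove (Set.range fun n => φ (D n) y) := fun y =>
    ⟨M y, by rintro r ⟨n, rfl⟩; exact hφbd (D n) y⟩
  set ustar : Ed d → ℝ := fun y => ⨆ n, φ (D n) y with hustar
  have hφcont : ∀ y, Continuous fun w => φ w y := fun y =>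
    (continuous_id.inner continuous_const).sub hucont
  have hFY : ∀ w y, φ w y ≤ ustar y := by
    intro w y
    have hw : w ∈ closure (Set.range D) := by
      have hwd : Dense (Set.range D) := TopologicalSpace.denseRange_denseSeq (Ed d)
      rw [hwd.closure_eq]; trivial
    obtain ⟨sq', hsq, hsqtend⟩ := mem_closure_iff_seq_limit.mp hw
    have htend : Tendsto (fun n => φ (sq' n) y) atTop (𝓝 (φ w y)) :=
      ((hφcont y).tendsto w).comp hsqtend
    refine le_of_tendsto htend (Eventually.of_forall fun n => ?_)
    obtain ⟨m, hm⟩ := hsq n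
    rw [← hm]
    exact le_ciSup (hbdd y) m
  have hFYeq : ∀ x, ustar (T x) = ⟪x, T x⟫ - u x := by
    intro x
    refine le_antisymm (ciSup_le fun n => ?_) (hFY x (T x))
    have h := husub x (D n)
    rw [inner_sub_right] at h
    have e1 : ⟪D n, T x⟫ = ⟪T x, D n⟫ := real_inner_comm _ _
    have e2 : ⟪x, T x⟫ = ⟪T x, x⟫ := real_inner_comm _ _
    simp only [hφ]
    rw [e1, e2]
    linarith
  have hustar_lb : ∀ y, -(u 0) ≤ ustar y := by
    intro y
    have h := hFY 0 y
    simp only [hφ, inner_zero_left] at h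
    linarith
  have hustar_abs : ∀ y, |ustar y| ≤ M y + |u 0| := by
    intro y
    rw [abs_le]
    constructor
    · have h1 := hustar_lb y
      have h2 := le_abs_self (u 0)
      have h3 : 0 ≤ M y := by
        simp only [hM]
        have : 0 ≤ τ * |f 0| := mul_nonneg hτ.le (abs_nonneg _)
        positivity
      linarith
    · have h1 : ustar y ≤ M y := ciSup_le fun n => hφbd (D n) y
      have h2 := abs_nonneg (u 0)
      linarith
  have hustar_meas : Measurable ustar := by
    refine Measurable.iSup fun n => ?_
    exact ((continuous_const.inner continuous_id).sub continuous_const).measurable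
  have hustar_int : Integrable ustar (μ.map T) := by
    refine Integrable.mono' (g := fun y => ‖y‖^2 + ((τ*C_F')^2 + τ*|f 0| + |u 0|))
      (hν2.add (integrable_const ((τ*C_F')^2 + τ*|f 0| + |u 0|)))
      hustar_meas.aestronglyMeasurable ?_
    filter_upwards with y
    rw [Real.norm_eq_abs]
    have h1 := hustar_abs y
    have h2 : M y ≤ ‖y‖^2 + (τ*C_F')^2 + τ*|f 0| := by
      simp only [hM]
      nlinarith [sq_nonneg (‖y‖ - τ*C_F'), norm_nonneg y, mul_nonneg hτ.le hC0]
    linarith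
  have hinnerT_int : Integrable (fun x => ⟪x, T x⟫) μ := by
    refine Integrable.mono' (g := fun x => (1 + τ*C_F') * ‖x‖^2 + τ*C_F')
      ((hμ2.const_mul (1 + τ*C_F')).add (integrable_const (τ*C_F')))
      (continuous_id.inner hTcont).aestronglyMeasurable ?_
    filter_upwards with x
    rw [Real.norm_eq_abs]
    have h1 : |⟪x, T x⟫| ≤ ‖x‖ * ‖T x‖ := abs_real_inner_le_norm _ _
    have h2 := hTbd x
    have h3 := hnorm_le x
    have h4 : ‖x‖ * ‖T x‖ ≤ ‖x‖ * (‖x‖ + τ*C_F') :=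
      mul_le_mul_of_nonneg_left h2 (norm_nonneg _)
    have h5 : τ * C_F' * ‖x‖ ≤ τ * C_F' * (1 + ‖x‖^2) :=
      mul_le_mul_of_nonneg_left h3 (mul_nonneg hτ.le hC0)
    nlinarith [norm_nonneg x]
  have hsubint : Integrable (fun x => ‖x - T x‖^2) μ := by
    have heqv : (fun x : Ed d => ‖x - T x‖^2) = fun x => ‖τ • G x‖^2 := by
      funext x; simp only [hT]; rw [sub_sub_cancel]
    rw [heqv]
    refine Integrable.mono' (integrable_const ((τ*C_F')^2))
      (((hGcont.const_smul τ).norm.pow 2).aestronglyMeasurable) ?_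
    filter_upwards with x
    rw [Real.norm_eq_abs, abs_of_nonneg (by positivity)]
    have h1 : ‖τ • G x‖ ≤ τ * C_F' := by
      rw [norm_smul, Real.norm_eq_abs, abs_of_pos hτ]
      exact mul_le_mul_of_nonneg_left (hGbd x) hτ.le
    nlinarith [norm_nonneg (τ • G x)]
  -- membership of the induced coupling
  set e : Ed d → Ed d × Ed d := fun x => (x, T x) with he
  have hemeas : Measurable e := measurable_id.prodMk hTmeas
  have hfst0 : (μ.map e).map Prod.fst = μ := by
    rw [Measure.map_map measurable_fst hemeas]
    exact Measure.map_id
  have hsnd0 : (μ.map e).map Prod.snd = μ.map T := by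
    rw [Measure.map_map measurable_snd hemeas]
    rfl
  have hcint0 : Integrable (fun p : Ed d × Ed d => ‖p.1 - p.2‖ ^ 2) (μ.map e) := by
    rw [integrable_map_measure cost_cont.aestronglyMeasurable hemeas.aemeasurable]
    exact hsubint
  have hval0 : ∫ p, ‖p.1 - p.2‖ ^ 2 ∂(μ.map e) = ∫ x, ‖x - T x‖^2 ∂μ := by
    rw [integral_map hemeas.aemeasurable cost_cont.aestronglyMeasurable]
  have hmem : (∫ x, ‖x - T x‖^2 ∂μ) ∈ { r : ℝ | ∃ γ : Measure (Ed d × Ed d),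
      IsCoupling γ μ (μ.map T) ∧ Integrable (fun p => ‖p.1 - p.2‖ ^ 2) γ ∧
      r = ∫ p, ‖p.1 - p.2‖ ^ 2 ∂γ } :=
    ⟨μ.map e, ⟨hfst0, hsnd0⟩, hcint0, hval0.symm⟩
  -- lower bound
  have hlb : ∀ r ∈ { r : ℝ | ∃ γ : Measure (Ed d × Ed d),
      IsCoupling γ μ (μ.map T) ∧ Integrable (fun p => ‖p.1 - p.2‖ ^ 2) γ ∧
      r = ∫ p, ‖p.1 - p.2‖ ^ 2 ∂γ }, (∫ x, ‖x - T x‖^2 ∂μ) ≤ r := by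
    rintro r ⟨γ, ⟨hfst, hsnd⟩, hcint, rfl⟩
    have hγ1 : Integrable (fun p : Ed d × Ed d => ‖p.1‖^2) γ := by
      have h := hμ2
      rw [← hfst] at h
      exact (integrable_map_measure (continuous_norm.pow 2).aestronglyMeasurable
        measurable_fst.aemeasurable).mp h
    have hγ2 : Integrable (fun p : Ed d × Ed d => ‖p.2‖^2) γ := by
      have h := hν2
      rw [← hsnd] at h
      exact (integrable_map_measure (continuous_norm.pow 2).aestronglyMeasurable
        measurable_snd.aemeasurable).mp h
    have hγu : Integrable (fun p : Ed d × Ed d => u p.1) γ := by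
      have h := huint
      rw [← hfst] at h
      exact (integrable_map_measure hucont.aestronglyMeasurable
        measurable_fst.aemeasurable).mp h
    have hγustar : Integrable (fun p : Ed d × Ed d => ustar p.2) γ := by
      have h := hustar_int
      rw [← hsnd] at h
      exact (integrable_map_measure hustar_meas.aestronglyMeasurable
        measurable_snd.aemeasurable).mp h
    have hγinner : Integrable (fun p : Ed d × Ed d => ⟪p.1, p.2⟫) γ := by
      refine Integrable.mono' (g := fun p => (‖p.1‖^2 + ‖p.2‖^2)/2)
        ((hγ1.add hγ2).div_const 2)
        (continuous_fst.inner continuous_snd).aestronglyMeasurable ?_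
      filter_upwards with p
      rw [Real.norm_eq_abs]
      have h1 : |⟪p.1, p.2⟫| ≤ ‖p.1‖ * ‖p.2‖ := abs_real_inner_le_norm _ _
      nlinarith [sq_nonneg (‖p.1‖ - ‖p.2‖)]
    have hIu : ∫ p, u p.1 ∂γ = ∫ x, u x ∂μ := by
      have h := integral_map (φ := Prod.fst) (μ := γ) measurable_fst.aemeasurable
        (hucont.aestronglyMeasurable (μ := γ.map Prod.fst))
      rw [hfst] at h
      exact h.symm
    have hI1 : ∫ p, ‖p.1‖^2 ∂γ = ∫ x, ‖x‖^2 ∂μ := by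
      have h := integral_map (φ := Prod.fst) (μ := γ) measurable_fst.aemeasurable
        ((continuous_norm.pow 2).aestronglyMeasurable (μ := γ.map Prod.fst))
      rw [hfst] at h
      exact h.symm
    have hI2 : ∫ p, ‖p.2‖^2 ∂γ = ∫ y, ‖y‖^2 ∂(μ.map T) := by
      have h := integral_map (φ := Prod.snd) (μ := γ) measurable_snd.aemeasurable
        ((continuous_norm.pow 2).aestronglyMeasurable (μ := γ.map Prod.snd))
      rw [hsnd] at h
      exact h.symm
    have hIustar : ∫ p, ustar p.2 ∂γ = ∫ y, ustar y ∂(μ.map T) := by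
      have h := integral_map (φ := Prod.snd) (μ := γ) measurable_snd.aemeasurable
        (hustar_meas.aestronglyMeasurable (μ := γ.map Prod.snd))
      rw [hsnd] at h
      exact h.symm
    have hIν2 : ∫ y, ‖y‖^2 ∂(μ.map T) = ∫ x, ‖T x‖^2 ∂μ :=
      integral_map hTmeas.aemeasurable (continuous_norm.pow 2).aestronglyMeasurable
    have hIνustar : ∫ y, ustar y ∂(μ.map T) = ∫ x, (⟪x, T x⟫ - u x) ∂μ := by
      rw [integral_map hTmeas.aemeasurable hustar_meas.aestronglyMeasurable]
      exact integral_congr_ae (Eventually.of_forall fun x => hFYeq x)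
    have hIinner_le : ∫ p, ⟪p.1, p.2⟫ ∂γ ≤ ∫ x, ⟪x, T x⟫ ∂μ := by
      have step1 : ∫ p, ⟪p.1, p.2⟫ ∂γ ≤ ∫ p, (u p.1 + ustar p.2) ∂γ := by
        refine integral_mono hγinner (hγu.add hγustar) fun p => ?_
        have h := hFY p.1 p.2
        simp only [hφ] at h
        linarith
      rw [integral_add hγu hγustar, hIu, hIustar, hIνustar,
        integral_sub hinnerT_int huint] at step1
      linarith
    have hexpγ : ∫ p, ‖p.1 - p.2‖^2 ∂γ
        = ∫ p, ‖p.1‖^2 ∂γ - 2 * ∫ p, ⟪p.1, p.2⟫ ∂γ + ∫ p, ‖p.2‖^2 ∂γ := by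
      have hpt : (fun p : Ed d × Ed d => ‖p.1 - p.2‖^2)
          = fun p => ‖p.1‖^2 - 2 * ⟪p.1, p.2⟫ + ‖p.2‖^2 := by
        funext p; exact norm_sub_sq_real _ _
      have hA : Integrable (fun p : Ed d × Ed d => ‖p.1‖^2 - 2*⟪p.1, p.2⟫) γ :=
        hγ1.sub (hγinner.const_mul 2)
      rw [hpt, integral_add hA hγ2, integral_sub hγ1 (hγinner.const_mul 2), integral_const_mul 2 _]
    have hexpμ : ∫ x, ‖x - T x‖^2 ∂μ
        = ∫ x, ‖x‖^2 ∂μ - 2 * ∫ x, ⟪x, T x⟫ ∂μ + ∫ x, ‖T x‖^2 ∂μ := by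
      have hpt : (fun x : Ed d => ‖x - T x‖^2)
          = fun x => ‖x‖^2 - 2 * ⟪x, T x⟫ + ‖T x‖^2 := by
        funext x; exact norm_sub_sq_real _ _
      have hA : Integrable (fun x : Ed d => ‖x‖^2 - 2*⟪x, T x⟫) μ :=
        hμ2.sub (hinnerT_int.const_mul 2)
      rw [hpt, integral_add hA hT2int, integral_sub hμ2 (hinnerT_int.const_mul 2),
        integral_const_mul 2 _]
    rw [hexpγ, hI1, hI2, hIν2, hexpμ]
    linarith
  have hW2eq : W2sq μ (μ.map T) = ∫ x, ‖x - T x‖^2 ∂μ :=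
    le_antisymm (csInf_le ⟨_, hlb⟩ hmem) (le_csInf ⟨_, hmem⟩ hlb)
  refine ⟨⟨hTmeas, rfl, hsubint, hW2eq.symm⟩, ?_, hνP2⟩
  -- absolute continuity
  have h1mτL : (0:ℝ) < 1 - τ * L_F' := by linarith
  have hanti : AntilipschitzWith (Real.toNNReal ((1 - τ*L_F')⁻¹)) T := by
    apply AntilipschitzWith.of_le_mul_dist
    intro x y
    rw [dist_eq_norm, dist_eq_norm]
    have hlow : (1 - τ*L_F') * ‖x - y‖ ≤ ‖T x - T y‖ := by
      have h2 : ‖x - y‖ - ‖τ • (G x - G y)‖ ≤ ‖(x - y) - τ • (G x - G y)‖ :=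
        norm_sub_norm_le _ _
      have h3 : ‖τ • (G x - G y)‖ ≤ τ * L_F' * ‖x - y‖ := by
        rw [norm_smul, Real.norm_eq_abs, abs_of_pos hτ, mul_assoc]
        exact mul_le_mul_of_nonneg_left (hGlip x y) hτ.le
      rw [hTsub]
      nlinarith [norm_nonneg (x - y)]
    have hcoe : ((Real.toNNReal ((1 - τ*L_F')⁻¹) : ℝ≥0) : ℝ) = (1 - τ*L_F')⁻¹ :=
      Real.coe_toNNReal _ (inv_nonneg.mpr h1mτL.le)
    rw [hcoe]
    calc ‖x - y‖ = (1 - τ*L_F')⁻¹ * ((1 - τ*L_F') * ‖x - y‖) := by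
          field_simp
      _ ≤ (1 - τ*L_F')⁻¹ * ‖T x - T y‖ :=
          mul_le_mul_of_nonneg_left hlow (inv_nonneg.mpr h1mτL.le)
  refine Measure.AbsolutelyContinuous.mk fun s hs hs0 => ?_
  rw [Measure.map_apply hTmeas hs]
  have h0 : μH[(Module.finrank ℝ (Ed d) : ℝ)] s = 0 := (vol_null_iff_hausdorff s).mp hs0
  have h1 : μH[(Module.finrank ℝ (Ed d) : ℝ)] (T ⁻¹' s) = 0 := by
    refine le_antisymm ?_ zero_le
    calc μH[(Module.finrank ℝ (Ed d) : ℝ)] (T ⁻¹' s)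
        ≤ (Real.toNNReal ((1 - τ*L_F')⁻¹) : ℝ≥0∞) ^ (Module.finrank ℝ (Ed d) : ℝ) *
          μH[(Module.finrank ℝ (Ed d) : ℝ)] s :=
          hanti.hausdorffMeasure_preimage_le (Nat.cast_nonneg _) s
      _ = 0 := by rw [h0, mul_zero]
  exact hμac ((vol_null_iff_hausdorff _).mpr h1)
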